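/- With A_0 = 0, B_0 = 1, A_1 = s², B_1 = 6t, and A_n = 2t(2n+1)A_{n−1} + s²A_{n−2}, B_n = 2t(2n+1)B_{n−1} + s²B_{n−2} for n ≥ 2, the quotients A_n/B_n converge and lim_{n→∞} A_n/B_n = 2s/(e^{s/t} − 1) + s − 2t; equivalently, e^{s/t} = 1 + 2s/(2t − s + lim_{n→∞} A_n/B_n). -/

import Mathlib

open Filter

/-- Numerators of the convergents of `K_{n=1}^∞ (s² / (2t(2n+1)))`. -/
def Aseq (s t : ℤ) : ℕ → ℤ
  | 0 => 0
  | 1 => s ^ 2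
  | n + 2 => 2 * t * (2 * (n + 2) + 1) * Aseq s t (n + 1) + s ^ 2 * Aseq s t n

/-- Denominators of the convergents of `K_{n=1}^∞ (s² / (2t(2n+1)))`. -/
def Bseq (s t : ℤ) : ℕ → ℤ
  | 0 => 1
  | 1 => 6 * t
  | n + 2 => 2 * t * (2 * (n + 2) + 1) * Bseq s t (n + 1) + s ^ 2 * Bseq s t n

/-!
The integrals `I_k(x) = ∫₀¹ (τ(1-τ))ᵏ e^{xτ} dτ` are positive, bounded by `e^{|x|}`, and
integration by parts gives the three-term recurrence
`(k+1)(k+2) I_k = 2(k+2)(2k+3) I_{k+1} + x² I_{k+2}`. With `x = s/t`, the rescaled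
`u_n = (-s²/t)ⁿ/n! · I_n(x)` therefore satisfy the recurrence of `A_n` and `B_n` (shifted by
one), so `u_{n+1} = I_0 A_n + u_1 B_n`. Since `u_n → 0` and `B_n ≥ 1`,
`A_n / B_n → -u_1 / I_0 = (s²/t) I_1 / I_0`, and the closed forms `x I_0 = e^x - 1`,
`x² I_1 + 2 I_0 = e^x + 1` evaluate this limit.
-/

open Real intervalIntegral
open scoped Nat Topology

noncomputable def hermiteIntegral (x : ℝ) (k : ℕ) : ℝ :=
  ∫ τ in (0 : ℝ)..1, (τ * (1 - τ)) ^ k * exp (x * τ)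

lemma hermiteIntegral_pos (x : ℝ) (k : ℕ) : 0 < hermiteIntegral x k := by
  refine intervalIntegral_pos_of_pos_on (Continuous.intervalIntegrable (by fun_prop) 0 1)
    (fun τ hτ => ?_) zero_lt_one
  have : 0 < 1 - τ := sub_pos.2 hτ.2
  have : 0 < τ := hτ.1
  positivity

lemma abs_hermiteIntegral_le (x : ℝ) (k : ℕ) : |hermiteIntegral x k| ≤ exp |x| := by
  have h := norm_integral_le_of_norm_le_const (a := 0) (b := 1) (C := exp |x|)
    (f := fun τ => (τ * (1 - τ)) ^ k * exp (x * τ)) fun τ hτ => by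
      rw [Set.uIoc_of_le zero_le_one] at hτ
      obtain ⟨hτ0, hτ1⟩ := hτ
      have hp0 : 0 ≤ τ * (1 - τ) := by nlinarith
      have hp1 : τ * (1 - τ) ≤ 1 := by nlinarith
      have hxτ : x * τ ≤ |x| :=
        (mul_le_mul_of_nonneg_right (le_abs_self x) hτ0.le).trans
          (mul_le_of_le_one_right (abs_nonneg x) hτ1)
      rw [norm_mul, norm_of_nonneg (pow_nonneg hp0 k), norm_of_nonneg (exp_pos _).le]
      exact (mul_le_of_le_one_left (exp_pos _).le (pow_le_one₀ hp0 hp1)).trans (exp_le_exp.2 hxτ)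
  simpa [hermiteIntegral] using h

lemma hasDerivAt_mul_exp_mul {f : ℝ → ℝ} {f' x τ : ℝ} (hf : HasDerivAt f f' τ) :
    HasDerivAt (fun τ => f τ * exp (x * τ)) ((f' + x * f τ) * exp (x * τ)) τ := by
  refine (hf.mul ((hasDerivAt_id' τ).const_mul x).exp).congr_deriv ?_
  ring

lemma hasDerivAt_weight (τ : ℝ) : HasDerivAt (fun τ : ℝ => τ * (1 - τ)) (1 - 2 * τ) τ := by
  refine ((hasDerivAt_id' τ).mul ((hasDerivAt_id' τ).const_sub 1)).congr_deriv ?_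
  ring

lemma mul_hermiteIntegral_zero (x : ℝ) : x * hermiteIntegral x 0 = exp x - 1 := by
  have h := integral_eq_sub_of_hasDerivAt (a := 0) (b := 1)
    (fun τ _ => hasDerivAt_mul_exp_mul (x := x) (hasDerivAt_const τ (1 : ℝ)))
    (Continuous.intervalIntegrable (by fun_prop) 0 1)
  simp only [zero_add, mul_one, one_mul, mul_zero, exp_zero] at h
  rw [hermiteIntegral, ← integral_const_mul, ← h]
  simp

lemma sq_mul_hermiteIntegral_one (x : ℝ) :
    x ^ 2 * hermiteIntegral x 1 + 2 * hermiteIntegral x 0 = exp x + 1 := by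
  have hG : ∀ τ : ℝ, HasDerivAt (fun τ => x * (τ * (1 - τ)) + 2 * τ - 1)
      (x * (1 - 2 * τ) + 2) τ := fun τ => by
    refine (((hasDerivAt_weight τ).const_mul x).add ((hasDerivAt_id' τ).const_mul 2)
      |>.sub_const 1).congr_deriv ?_
    ring
  have h := integral_eq_sub_of_hasDerivAt (a := 0) (b := 1)
    (fun τ _ => hasDerivAt_mul_exp_mul (x := x) (hG τ))
    (Continuous.intervalIntegrable (by fun_prop) 0 1)
  rw [hermiteIntegral, hermiteIntegral, ← integral_const_mul, ← integral_const_mul,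
    ← integral_add (Continuous.intervalIntegrable (by fun_prop) 0 1)
      (Continuous.intervalIntegrable (by fun_prop) 0 1)]
  convert h using 1
  · congr 1; ext τ; ring
  · norm_num

lemma hasDerivAt_weight_pow (k : ℕ) (τ : ℝ) :
    HasDerivAt (fun τ : ℝ => (τ * (1 - τ)) ^ (k + 1))
      ((k + 1) * (τ * (1 - τ)) ^ k * (1 - 2 * τ)) τ := by
  refine ((hasDerivAt_weight τ).fun_pow (k + 1)).congr_deriv ?_
  simp

lemma hermiteIntegral_recurrence (x : ℝ) (k : ℕ) :
    (k + 1) * (k + 2) * hermiteIntegral x k =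
      2 * (k + 2) * (2 * k + 3) * hermiteIntegral x (k + 1) +
        x ^ 2 * hermiteIntegral x (k + 2) := by
  -- the antiderivative has the factor `τ * (1 - τ)`, so it vanishes at both ends
  have hF : ∀ τ : ℝ, HasDerivAt
      (fun τ => (k + 2) * (τ * (1 - τ)) ^ (k + 1) * (1 - 2 * τ) - x * (τ * (1 - τ)) ^ (k + 2))
      ((k + 2) * ((k + 1) * (τ * (1 - τ)) ^ k * (1 - 2 * τ) * (1 - 2 * τ)
        + (τ * (1 - τ)) ^ (k + 1) * (-2))
        - x * ((k + 2) * (τ * (1 - τ)) ^ (k + 1) * (1 - 2 * τ))) τ :=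
    fun τ => by
      have h2 := hasDerivAt_weight_pow (k + 1) τ
      push_cast at h2
      exact ((((hasDerivAt_weight_pow k τ).const_mul _).mul
        (((hasDerivAt_id' τ).const_mul 2).const_sub 1)).sub (h2.const_mul x)).congr_deriv (by ring)
  have h := integral_eq_sub_of_hasDerivAt (a := 0) (b := 1)
    (fun τ _ => hasDerivAt_mul_exp_mul (x := x) (hF τ))
    (Continuous.intervalIntegrable (by fun_prop) 0 1)
  simp only [hermiteIntegral]
  rw [← integral_const_mul, ← integral_const_mul, ← integral_const_mul,
    ← integral_add (Continuous.intervalIntegrable (by fun_prop) 0 1)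
      (Continuous.intervalIntegrable (by fun_prop) 0 1), ← sub_eq_zero,
    ← integral_sub (Continuous.intervalIntegrable (by fun_prop) 0 1)
      (Continuous.intervalIntegrable (by fun_prop) 0 1)]
  convert h using 1
  · congr 1; ext τ; ring
  · simp

lemma sq_mul_hermiteIntegral_one_div_zero {x : ℝ} (hx : x ≠ 0) :
    x ^ 2 * hermiteIntegral x 1 / hermiteIntegral x 0 = 2 * x / (exp x - 1) + x - 2 := by
  have hE : exp x - 1 ≠ 0 := sub_ne_zero.2 (mt (exp_eq_one_iff x).1 hx)
  have h0 := mul_hermiteIntegral_zero x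
  rw [div_eq_iff (hermiteIntegral_pos x 0).ne', eq_sub_of_add_eq (sq_mul_hermiteIntegral_one x)]
  field_simp
  linear_combination (-(exp x + 1)) * h0

/-- For `x = s / t` this is `(-s² / t)ⁿ / n! * I_n(s / t)`; parametrizing by `t` and `x` keeps its
recurrence free of division. -/
noncomputable def hermiteRemainder (t x : ℝ) (n : ℕ) : ℝ :=
  (-(t * x ^ 2)) ^ n / n ! * hermiteIntegral x n

lemma hermiteRemainder_add_two (t x : ℝ) (n : ℕ) :
    hermiteRemainder t x (n + 2) =
      2 * t * (2 * n + 3) * hermiteRemainder t x (n + 1) +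
        (t * x) ^ 2 * hermiteRemainder t x n := by
  have h := hermiteIntegral_recurrence x n
  simp only [hermiteRemainder, Nat.factorial_succ, Nat.cast_mul, pow_succ]
  push_cast
  field_simp
  linear_combination (-(t ^ 2 * x ^ 2 * (-(t * x ^ 2)) ^ n)) * h

lemma tendsto_hermiteRemainder (t x : ℝ) : Tendsto (hermiteRemainder t x) atTop (𝓝 0) := by
  have h := (FloorSemiring.tendsto_pow_div_factorial_atTop |t * x ^ 2|).mul_const (exp |x|)
  rw [zero_mul] at h
  refine squeeze_zero_norm (fun n => ?_) h
  rw [hermiteRemainder, norm_mul, norm_div, norm_pow, norm_neg, Real.norm_natCast]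
  exact mul_le_mul_of_nonneg_left (abs_hermiteIntegral_le _ _) (by positivity)

lemma eq_Aseq_Bseq_of_recurrence {s t : ℤ} {u : ℕ → ℝ}
    (hu : ∀ n, u (n + 2) = 2 * t * (2 * n + 3) * u (n + 1) + s ^ 2 * u n) (n : ℕ) :
    u (n + 1) = u 0 * Aseq s t n + u 1 * Bseq s t n := by
  induction n using Nat.twoStepInduction with
  | zero => simp [Aseq, Bseq]
  | one =>
    rw [hu 0]
    simp only [Aseq, Bseq]
    push_cast
    ring
  | more n ih₀ ih₁ =>
    rw [hu, ih₀, ih₁, Aseq, Bseq]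
    push_cast
    ring

lemma one_le_Bseq (s : ℤ) {t : ℤ} (ht : 0 < t) (n : ℕ) : 1 ≤ Bseq s t n := by
  induction n using Nat.twoStepInduction with
  | zero => simp [Bseq]
  | one => simp only [Bseq]; omega
  | more n ih₀ ih₁ =>
    rw [Bseq]
    have hc : 1 ≤ 2 * t * (2 * ((n : ℤ) + 2) + 1) := by nlinarith
    nlinarith [mul_le_mul hc ih₁ zero_le_one (by linarith),
      mul_nonneg (sq_nonneg s) (zero_le_one.trans ih₀)]

lemma tendsto_div_of_tendsto_linear_combination {a b : ℕ → ℝ} {α β : ℝ} (hα : α ≠ 0)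
    (hb : ∀ n, 1 ≤ b n) (h : Tendsto (fun n => α * a n + β * b n) atTop (𝓝 0)) :
    Tendsto (fun n => a n / b n) atTop (𝓝 (-β / α)) := by
  have hnorm := h.norm
  rw [norm_zero] at hnorm
  have hdiv : Tendsto (fun n => (α * a n + β * b n) / b n) atTop (𝓝 0) := by
    refine squeeze_zero_norm (fun n => ?_) hnorm
    rw [norm_div, norm_of_nonneg (zero_le_one.trans (hb n))]
    exact div_le_self (norm_nonneg _) (hb n)
  have := (hdiv.sub_const β).div_const α
  rw [zero_sub] at this
  refine this.congr fun n => ?_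
  have := (zero_lt_one.trans_le (hb n)).ne'
  field_simp
  ring

theorem convergents_tendsto_exp_general (s t : ℤ) (hs : s ≠ 0) (ht : 0 < t) :
    Tendsto (fun n => (Aseq s t n : ℝ) / (Bseq s t n : ℝ)) atTop
      (nhds (2 * (s : ℝ) / (Real.exp ((s : ℝ) / (t : ℝ)) - 1) + (s : ℝ) - 2 * (t : ℝ))) ∧
    Real.exp ((s : ℝ) / (t : ℝ)) = 1 + 2 * (s : ℝ) / (2 * (t : ℝ) - (s : ℝ) +
      (2 * (s : ℝ) / (Real.exp ((s : ℝ) / (t : ℝ)) - 1) + (s : ℝ) - 2 * (t : ℝ))) := by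
  have htR : (t : ℝ) ≠ 0 := by positivity
  have hsR : (s : ℝ) ≠ 0 := Int.cast_ne_zero.2 hs
  have hx : (s : ℝ) / t ≠ 0 := div_ne_zero hsR htR
  set u := hermiteRemainder t (s / t)
  have hcomb (n : ℕ) : u (n + 1) = u 0 * Aseq s t n + u 1 * Bseq s t n :=
    eq_Aseq_Bseq_of_recurrence (fun n => by
      simp only [u]
      rw [hermiteRemainder_add_two, mul_div_cancel₀ _ htR]) n
  have hu0 : u 0 = hermiteIntegral (s / t) 0 := by simp [u, hermiteRemainder]
  have hlim := tendsto_div_of_tendsto_linear_combination (hu0 ▸ (hermiteIntegral_pos _ 0).ne')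
    (fun n => by exact_mod_cast one_le_Bseq s ht n)
    (((tendsto_hermiteRemainder _ _).comp (tendsto_add_atTop_nat 1)).congr hcomb)
  have hval : -u 1 / u 0 = 2 * s / (exp (s / t) - 1) + s - 2 * t := by
    have h := sq_mul_hermiteIntegral_one_div_zero hx
    rw [hu0]
    simp only [u, hermiteRemainder]
    field_simp at h ⊢
    linear_combination h
  refine ⟨hval ▸ hlim, ?_⟩
  rw [show 2 * (t : ℝ) - s + (2 * s / (exp (s / t) - 1) + s - 2 * t) = 2 * s / (exp (s / t) - 1)
    by ring, div_div_cancel₀ (mul_ne_zero two_ne_zero hsR)]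
  ring

theorem convergents_tendsto_exp (s t : ℤ) (hs : s ≠ 0) (ht : 0 < t)
    (hst : Int.gcd s t = 1) :
    Tendsto (fun n => (Aseq s t n : ℝ) / (Bseq s t n : ℝ)) atTop
      (nhds (2 * (s : ℝ) / (Real.exp ((s : ℝ) / (t : ℝ)) - 1) + (s : ℝ) - 2 * (t : ℝ))) ∧
    Real.exp ((s : ℝ) / (t : ℝ)) = 1 + 2 * (s : ℝ) / (2 * (t : ℝ) - (s : ℝ) +
      (2 * (s : ℝ) / (Real.exp ((s : ℝ) / (t : ℝ)) - 1) + (s : ℝ) - 2 * (t : ℝ))) :=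
  convergents_tendsto_exp_general s t hs ht
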